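/- arXiv:2405.02725 — 4 statements merged into one kernel-verified Lean document; each statement's English description precedes it below -/
import Mathlib

section
/- Suppose for all real-valued f in a class 𝒞 the identity ∫(Hf)² w₁ dx = ∫ f² w₁ dx − 2∫ f·Hf·w₂ dx holds, where w₁ ≥ 0 a.e. and |w₂| ≤ τ·w₁ a.e. for some τ ≥ 0, and all integrals are finite. Then ∫(Hf)² w₁ dx ≤ φ(τ²) ∫ f² w₁ dx with φ(s) = 1 + 2s + 2√(s²+s). -/
open Real MeasureTheory

/-- if for all real-valued `f` in a class `𝒞` one has
`∫(Hf)² w₁ = ∫ f² w₁ − 2∫ f·Hf·w₂` with `w₁ ≥ 0` a.e., `|w₂| ≤ τ w₁` a.e. and all integrals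
finite, then `∫(Hf)² w₁ ≤ φ(τ²) ∫ f² w₁` with `φ(s) = 1 + 2s + 2√(s²+s)`. -/
theorem stmt11 (𝒞 : Set (ℝ → ℝ)) (H : (ℝ → ℝ) → (ℝ → ℝ)) (w₁ w₂ : ℝ → ℝ)
    (τ : ℝ) (hτ : 0 ≤ τ)
    (hw₁ : ∀ᵐ x : ℝ, 0 ≤ w₁ x)
    (hw₂ : ∀ᵐ x : ℝ, |w₂ x| ≤ τ * w₁ x)
    (hint : ∀ f ∈ 𝒞,
      Integrable (fun x => (H f x) ^ 2 * w₁ x) ∧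
      Integrable (fun x => (f x) ^ 2 * w₁ x) ∧
      Integrable (fun x => f x * H f x * w₁ x) ∧
      Integrable (fun x => f x * H f x * w₂ x))
    (hid : ∀ f ∈ 𝒞,
      ∫ x, (H f x) ^ 2 * w₁ x = (∫ x, (f x) ^ 2 * w₁ x) - 2 * ∫ x, f x * H f x * w₂ x) :
    ∀ f ∈ 𝒞,
      ∫ x, (H f x) ^ 2 * w₁ x ≤
        (1 + 2 * τ ^ 2 + 2 * Real.sqrt ((τ ^ 2) ^ 2 + τ ^ 2)) * ∫ x, (f x) ^ 2 * w₁ x := by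
  intro f hf
  obtain ⟨h1, h2, h3, h4⟩ := hint f hf
  have hid' := hid f hf
  set A := ∫ x, (H f x) ^ 2 * w₁ x with hA
  set B := ∫ x, (f x) ^ 2 * w₁ x with hB
  set C := ∫ x, f x * H f x * w₂ x with hC
  set s := τ ^ 2 with hs
  set r := Real.sqrt (s ^ 2 + s) with hr
  clear_value A B C
  have hs0 : 0 ≤ s := sq_nonneg τ
  have hr2 : r ^ 2 = s ^ 2 + s := Real.sq_sqrt (by positivity)
  have hr0 : 0 ≤ r := Real.sqrt_nonneg _
  clear_value s r
  by_cases hτ0 : τ = 0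
  · -- trivial case: w₂ = 0 a.e.
    have hCz : C = 0 := by
      rw [hC]
      have hz : ∀ᵐ x : ℝ, f x * H f x * w₂ x = 0 := by
        filter_upwards [hw₂] with x hx
        have : w₂ x = 0 := by
          have := abs_nonneg (w₂ x)
          rw [hτ0] at hx
          simp only [zero_mul] at hx
          have : |w₂ x| = 0 := le_antisymm hx this
          exact abs_eq_zero.mp this
        simp [this]
      rw [integral_congr_ae hz, integral_zero]
    have hrz : r = 0 := by
      rw [hr, hs, hτ0]; norm_num
    rw [hid', hCz]
    rw [hrz, hs, hτ0]
    ring_nf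
    norm_num
  · have hτpos : 0 < τ := lt_of_le_of_ne hτ (Ne.symm hτ0)
    have hspos : 0 < s := by rw [hs]; positivity
    have hrs : s < r := by
      nlinarith [hr2, hr0]
    set u := r - s with hu_def
    clear_value u
    have hu : 0 < u := by rw [hu_def]; linarith
    have hu1 : u < 1 := by
      have : r ^ 2 < (s + 1) ^ 2 := by nlinarith
      have : r < s + 1 := by nlinarith
      rw [hu_def]; linarith
    -- pointwise bound and integral bound
    have hRHSint : Integrable (fun x => (s / u) * ((f x) ^ 2 * w₁ x) + u * ((H f x) ^ 2 * w₁ x)) :=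
      (h2.const_mul _).add (h1.const_mul _)
    have key : |2 * C| ≤ (s / u) * B + u * A := by
      have h2C : |2 * C| = |∫ x, 2 * (f x * H f x * w₂ x)| := by
        rw [hC, integral_const_mul]
      rw [h2C]
      calc |∫ x, 2 * (f x * H f x * w₂ x)|
          ≤ ∫ x, |2 * (f x * H f x * w₂ x)| := by
            have := norm_integral_le_integral_norm (μ := volume)
              (fun x => 2 * (f x * H f x * w₂ x))
            simp only [Real.norm_eq_abs] at this
            exact this
        _ ≤ ∫ x, ((s / u) * ((f x) ^ 2 * w₁ x) + u * ((H f x) ^ 2 * w₁ x)) := by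
            apply integral_mono_ae ((h4.const_mul 2).abs) hRHSint
            filter_upwards [hw₁, hw₂] with x hx1 hx2
            set a := f x
            set b := H f x
            have habs : |2 * (a * b * w₂ x)| ≤ 2 * τ * (|a| * |b|) * w₁ x := by
              have : |2 * (a * b * w₂ x)| = 2 * (|a| * |b|) * |w₂ x| := by
                rw [abs_mul, abs_mul, abs_mul]
                simp [abs_of_nonneg]
                ring
              rw [this]
              calc 2 * (|a| * |b|) * |w₂ x| ≤ 2 * (|a| * |b|) * (τ * w₁ x) := by
                    apply mul_le_mul_of_nonneg_left hx2 (by positivity)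
                _ = 2 * τ * (|a| * |b|) * w₁ x := by ring
            have hAMGM : 2 * τ * (|a| * |b|) ≤ (s / u) * a ^ 2 + u * b ^ 2 := by
              have h5 : 2 * τ * u * (|a| * |b|) ≤ s * a ^ 2 + u ^ 2 * b ^ 2 := by
                nlinarith [sq_nonneg (τ * |a| - u * |b|), sq_abs a, sq_abs b]
              have h6 : (s * a ^ 2 + u ^ 2 * b ^ 2) / u = (s / u) * a ^ 2 + u * b ^ 2 := by
                field_simp
              rw [← h6, le_div_iff₀ hu]
              nlinarith [h5]
            calc |2 * (a * b * w₂ x)| ≤ 2 * τ * (|a| * |b|) * w₁ x := habs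
              _ ≤ ((s / u) * a ^ 2 + u * b ^ 2) * w₁ x :=
                  mul_le_mul_of_nonneg_right hAMGM hx1
              _ = (s / u) * (a ^ 2 * w₁ x) + u * (b ^ 2 * w₁ x) := by ring
        _ = (s / u) * B + u * A := by
            rw [integral_add (h2.const_mul _) (h1.const_mul _),
              integral_const_mul, integral_const_mul, ← hA, ← hB]
    -- from the identity: A - B = -(2C) ≤ |2C|
    have h7 : A - B ≤ (s / u) * B + u * A := by
      have : A - B = -(2 * C) := by rw [hid']; ring
      have h8 : -(2 * C) ≤ |2 * C| := neg_le_abs _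
      linarith
    have h9 : u * (A - B) ≤ u * ((s / u) * B + u * A) :=
      mul_le_mul_of_nonneg_left h7 hu.le
    have h10 : u * ((s / u) * B + u * A) = s * B + u ^ 2 * A := by
      field_simp
    have hkey2 : u * (1 - u) * A ≤ (u + s) * B := by
      rw [h10] at h9; nlinarith [h9]
    have hphi : (1 + 2 * s + 2 * r) * (u * (1 - u)) = u + s := by
      rw [hu_def]
      linear_combination (1 + 2 * s - 2 * r) * hr2
    have hpos : 0 < u * (1 - u) := mul_pos hu (by linarith)
    have hfin : u * (1 - u) * A ≤ u * (1 - u) * ((1 + 2 * s + 2 * r) * B) := by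
      calc u * (1 - u) * A ≤ (u + s) * B := hkey2
        _ = u * (1 - u) * ((1 + 2 * s + 2 * r) * B) := by rw [← hphi]; ring
    exact le_of_mul_le_mul_left hfin hpos
end

section
/- Suppose for all real-valued f in a class the two identities ∫(Hf)² u dx = ∫ f² u dx − 2∫ f·Hf·v dx and ∫(Hf)² v dx = ∫ f² v dx + 2∫ f·Hf·u dx hold, where u, v ≥ 0 a.e. and u² + v² = w² with w ≥ 0, and all integrals are finite. Then ∫(Hf)² w dx ≤ √2·(1 + 2√2 + 2√(2+√2)) ∫ f² w dx. -/
set_option maxHeartbeats 1000000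


open Real MeasureTheory

/-- if for all real-valued `f` in a class `𝒞` the two identities
`∫(Hf)² u = ∫ f² u − 2∫ f·Hf·v` and `∫(Hf)² v = ∫ f² v + 2∫ f·Hf·u` hold, where
`u, v ≥ 0` a.e., `u² + v² = w²` with `w ≥ 0`, and all integrals are finite, then
`∫(Hf)² w ≤ √2·(1 + 2√2 + 2√(2+√2)) ∫ f² w`. -/
theorem stmt13 (𝒞 : Set (ℝ → ℝ)) (H : (ℝ → ℝ) → (ℝ → ℝ)) (u v w : ℝ → ℝ)
    (hu : ∀ᵐ x : ℝ, 0 ≤ u x) (hv : ∀ᵐ x : ℝ, 0 ≤ v x) (hw : ∀ᵐ x : ℝ, 0 ≤ w x)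
    (huvw : ∀ᵐ x : ℝ, (u x) ^ 2 + (v x) ^ 2 = (w x) ^ 2)
    (hint : ∀ f ∈ 𝒞,
      Integrable (fun x => (H f x) ^ 2 * u x) ∧
      Integrable (fun x => (H f x) ^ 2 * v x) ∧
      Integrable (fun x => (H f x) ^ 2 * w x) ∧
      Integrable (fun x => (f x) ^ 2 * u x) ∧
      Integrable (fun x => (f x) ^ 2 * v x) ∧
      Integrable (fun x => (f x) ^ 2 * w x) ∧
      Integrable (fun x => f x * H f x * u x) ∧
      Integrable (fun x => f x * H f x * v x) ∧
      Integrable (fun x => f x * H f x * w x))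
    (hid₁ : ∀ f ∈ 𝒞,
      ∫ x, (H f x) ^ 2 * u x = (∫ x, (f x) ^ 2 * u x) - 2 * ∫ x, f x * H f x * v x)
    (hid₂ : ∀ f ∈ 𝒞,
      ∫ x, (H f x) ^ 2 * v x = (∫ x, (f x) ^ 2 * v x) + 2 * ∫ x, f x * H f x * u x) :
    ∀ f ∈ 𝒞,
      ∫ x, (H f x) ^ 2 * w x ≤
        Real.sqrt 2 * (1 + 2 * Real.sqrt 2 + 2 * Real.sqrt (2 + Real.sqrt 2)) *
          ∫ x, (f x) ^ 2 * w x := by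
  intro f hf
  obtain ⟨i1, i2, i3, i4, i5, i6, i7, i8, i9⟩ := hint f hf
  have e1 := hid₁ f hf
  have e2 := hid₂ f hf
  clear hint hid₁ hid₂
  set g := H f with hg
  set s := Real.sqrt 2 with hsdef
  set r := Real.sqrt (2 + Real.sqrt 2) with hrdef
  have hs2 : s ^ 2 = 2 := Real.sq_sqrt (by norm_num)
  have hs0 : 0 < s := Real.sqrt_pos.mpr (by norm_num)
  have hr2 : r ^ 2 = 2 + s := Real.sq_sqrt (by positivity)
  have hr0 : 0 < r := Real.sqrt_pos.mpr (by positivity)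
  have hsr : s < r := by nlinarith
  have hr1 : r < 1 + s := by nlinarith
  set δ : ℝ := r - s with hδdef
  have hδ0 : 0 < δ := sub_pos.mpr hsr
  have hδ1 : δ < 1 := by rw [hδdef]; linarith
  set c : ℝ := 2 / δ with hcdef
  have hc : δ * c = 2 := by rw [hcdef]; field_simp
  have hc0 : 0 < c := by positivity
  -- Step 1 : ∫ g²w ≤ ∫ g²u + ∫ g²v
  have h1 : ∫ x, g x ^ 2 * w x ≤ (∫ x, g x ^ 2 * u x) + ∫ x, g x ^ 2 * v x := by
    rw [← integral_add i1 i2]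
    refine integral_mono_ae i3 (i1.add i2) ?_
    filter_upwards [hu, hv, hw, huvw] with x hux hvx hwx he
    have hsq : w x ^ 2 ≤ (u x + v x) ^ 2 := by nlinarith [mul_nonneg hux hvx]
    have hwuv : w x ≤ u x + v x := by nlinarith [hsq, hux, hvx, hwx]
    nlinarith [sq_nonneg (g x), hwuv]
  -- Step 2 : ∫ f²u + ∫ f²v ≤ s * ∫ f²w
  have h2 : (∫ x, f x ^ 2 * u x) + ∫ x, f x ^ 2 * v x ≤ s * ∫ x, f x ^ 2 * w x := by
    rw [← integral_add i4 i5, ← integral_const_mul]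
    refine integral_mono_ae (i4.add i5) (i6.const_mul s) ?_
    filter_upwards [hu, hv, hw, huvw] with x hux hvx hwx he
    have hsw : (0:ℝ) ≤ s * w x := by positivity
    have hsq : (u x + v x) ^ 2 ≤ (s * w x) ^ 2 := by nlinarith [sq_nonneg (u x - v x), hs2]
    have huvsw : u x + v x ≤ s * w x := by nlinarith [hsq, hsw, hux, hvx]
    nlinarith [sq_nonneg (f x), huvsw]
  -- Step 3 : 2∫fgu − 2∫fgv ≤ δ ∫g²w + c ∫f²w
  have h3 : 2 * (∫ x, f x * g x * u x) - 2 * (∫ x, f x * g x * v x) ≤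
      δ * (∫ x, g x ^ 2 * w x) + c * ∫ x, f x ^ 2 * w x := by
    have hp : Integrable (fun x => 2 * (f x * g x * u x) - 2 * (f x * g x * v x)) :=
      (i7.const_mul 2).sub (i8.const_mul 2)
    have hq : Integrable (fun x => δ * (g x ^ 2 * w x) + c * (f x ^ 2 * w x)) :=
      (i3.const_mul δ).add (i6.const_mul c)
    have key : ∫ x, (2 * (f x * g x * u x) - 2 * (f x * g x * v x)) ≤
        ∫ x, (δ * (g x ^ 2 * w x) + c * (f x ^ 2 * w x)) := by
      refine integral_mono_ae hp hq ?_
      filter_upwards [hu, hv, hw, huvw] with x hux hvx hwx he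
      have hsw : (0:ℝ) ≤ s * w x := by positivity
      have hsq2 : (u x - v x) ^ 2 ≤ (s * w x) ^ 2 := by
        nlinarith [mul_nonneg hux hvx, hs2, sq_nonneg (w x)]
      have ht : |u x - v x| ≤ s * w x :=
        abs_le.mpr ⟨by nlinarith [hsq2, hsw], by nlinarith [hsq2, hsw]⟩
      have habs : 2 * (f x * g x * u x) - 2 * (f x * g x * v x) ≤
          2 * |f x| * |g x| * (s * w x) := by
        have heq : 2 * (f x * g x * u x) - 2 * (f x * g x * v x) =
            2 * (f x * g x) * (u x - v x) := by ring
        rw [heq]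
        calc 2 * (f x * g x) * (u x - v x) ≤ |2 * (f x * g x) * (u x - v x)| := le_abs_self _
          _ = 2 * |f x| * |g x| * |u x - v x| := by
              simp only [abs_mul, abs_two]; ring
          _ ≤ 2 * |f x| * |g x| * (s * w x) := by
              have h2fg : (0:ℝ) ≤ 2 * |f x| * |g x| := by positivity
              exact mul_le_mul_of_nonneg_left ht h2fg
      have hsq : 2 * s * (|f x| * |g x|) ≤ δ * g x ^ 2 + c * f x ^ 2 := by
        rw [← sq_abs (g x), ← sq_abs (f x)]
        have key2 : 2 * s * (|f x| * |g x|) * δ ≤ δ ^ 2 * |g x| ^ 2 + 2 * |f x| ^ 2 := by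
          nlinarith [sq_nonneg (δ * |g x| - s * |f x|), hs2, sq_nonneg (|f x|)]
        have hcf : δ * c * |f x| ^ 2 = 2 * |f x| ^ 2 := by rw [hc]
        have h' : 2 * s * (|f x| * |g x|) * δ ≤ (δ * |g x| ^ 2 + c * |f x| ^ 2) * δ := by
          nlinarith [key2, hcf]
        exact le_of_mul_le_mul_right h' hδ0
      calc 2 * (f x * g x * u x) - 2 * (f x * g x * v x)
          ≤ 2 * |f x| * |g x| * (s * w x) := habs
        _ = (2 * s * (|f x| * |g x|)) * w x := by ring
        _ ≤ (δ * g x ^ 2 + c * f x ^ 2) * w x := mul_le_mul_of_nonneg_right hsq hwx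
        _ = δ * (g x ^ 2 * w x) + c * (f x ^ 2 * w x) := by ring
    rw [integral_add (i3.const_mul δ) (i6.const_mul c), integral_const_mul,
      integral_const_mul, integral_sub (i7.const_mul 2) (i8.const_mul 2),
      integral_const_mul, integral_const_mul] at key
    exact key
  -- Combine
  set Aw := ∫ x, g x ^ 2 * w x with hAw
  set Fw := ∫ x, f x ^ 2 * w x with hFw
  have hmain : Aw ≤ s * Fw + (δ * Aw + c * Fw) := by linarith
  -- Key algebraic identity
  have hK : s * (1 + 2 * s + 2 * r) * (δ * (1 - δ)) = s * δ + 2 := by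
    rw [hδdef]
    linear_combination (1 - s + 2 * s * r - 2 * s ^ 2) * hs2 + (s + 2 * s ^ 2 - 2 * s * r) * hr2
  have hpos : 0 < δ * (1 - δ) := mul_pos hδ0 (by linarith)
  have ht := mul_le_mul_of_nonneg_left hmain hδ0.le
  have hcF : δ * (c * Fw) = 2 * Fw := by rw [← mul_assoc, hc]
  have hKF : s * (1 + 2 * s + 2 * r) * (δ * (1 - δ)) * Fw = (s * δ + 2) * Fw := by
    rw [hK]
  have hmul : δ * (1 - δ) * Aw ≤ δ * (1 - δ) * (s * (1 + 2 * s + 2 * r)) * Fw := by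
    nlinarith [ht, hcF, hKF]
  have hfin : Aw ≤ s * (1 + 2 * s + 2 * r) * Fw := by nlinarith [hmul, hpos]
  calc Aw ≤ s * (1 + 2 * s + 2 * r) * Fw := hfin
    _ = Real.sqrt 2 * (1 + 2 * Real.sqrt 2 + 2 * Real.sqrt (2 + Real.sqrt 2)) * Fw := by
        rw [hsdef, hrdef]
end

section
/- Let β ∈ (−1,1). Then ∫₁^∞ x^{−2−β} |log|1−x|| dx < ∞, and as β → −1⁺ the quantity 1 − (2(1+β)/π)·cot((1−β)π/2)·∫₁^∞ x^{−2−β} log|1−x| dx is bounded below by c·(1+β)^{−2} for some constant c > 0. -/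
/-
For `x > 1`, `log |1 - x| = log (x - 1)`. Put `s = 1 + β > 0`. On `(1, 2]` the integrand lies
between `log (x - 1)`, whose integral is `-1`, and `0`; on `(2, ∞)` it lies between
`g x = x ^ (-1 - s) * log (x / 2)` and `2 * g x`, and `∫_{(2, ∞)} g = 2 ^ (-s) / s ^ 2` by an
explicit antiderivative. This gives integrability and the lower bound `-1 + 1 / (2 s²)`
for the integral. With `φ = s π / 2`, the coefficient `K` of the integral is `(4 / π²) φ cot φ`, and
`cos φ ≤ φ cot φ ≤ 1` (from `sin φ ≤ φ < tan φ`) puts `K` in `[2 / π², 1]` for small `s`, so the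
quantity is at least `(1 - K) + K / (2 s²) ≥ 1 / (π² s²)`.
-/

open Real MeasureTheory Filter Set Topology

section LogMoment

variable {a s : ℝ}

lemma hasDerivAt_rpow_log_div_antideriv (ha : 0 < a) (hs : s ≠ 0) {x : ℝ} (hx : 0 < x) :
    HasDerivAt (fun y => -(y ^ (-s) * (s * log (y / a) + 1)) / s ^ 2)
      (x ^ (-1 - s) * log (x / a)) x := by
  have hpow : HasDerivAt (fun y => y ^ (-s)) (-s * x ^ (-s - 1)) x :=
    hasDerivAt_rpow_const (Or.inl hx.ne')
  have hlog : HasDerivAt (fun y => s * log (y / a) + 1) (s * x⁻¹) x := by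
    have := ((hasDerivAt_id x).div_const a).log (by positivity)
    refine ((this.const_mul s).add_const 1).congr_deriv ?_
    simp only [id]
    field_simp
  refine ((hpow.mul hlog).neg.div_const (s ^ 2)).congr_deriv ?_
  rw [show -s - 1 = -1 - s by ring, show x ^ (-s) = x ^ (-1 - s) * x by
    rw [← rpow_add_one hx.ne']; ring_nf]
  field_simp
  ring

lemma tendsto_rpow_log_div_antideriv (ha : 0 < a) (hs : 0 < s) :
    Tendsto (fun y => -(y ^ (-s) * (s * log (y / a) + 1)) / s ^ 2) atTop (𝓝 0) := by
  have hlog : Tendsto (fun y => log y / y ^ s) atTop (𝓝 0) :=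
    (isLittleO_log_rpow_atTop hs).tendsto_div_nhds_zero
  have hpow : Tendsto (fun y : ℝ => y ^ (-s)) atTop (𝓝 0) := tendsto_rpow_neg_atTop hs
  have := ((hlog.const_mul s).add (hpow.const_mul (1 - s * log a))).neg.div_const (s ^ 2)
  simp only [mul_zero, add_zero, neg_zero, zero_div] at this
  refine this.congr' ?_
  filter_upwards [eventually_gt_atTop 0] with y hy
  rw [log_div hy.ne' ha.ne', rpow_neg hy.le]
  field_simp
  ring

lemma rpow_mul_log_div_nonneg (ha : 0 < a) {x : ℝ} (hx : x ∈ Ioi a) :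
    0 ≤ x ^ (-1 - s) * log (x / a) :=
  mul_nonneg (rpow_nonneg (ha.trans hx).le _) (log_nonneg ((one_le_div ha).2 (le_of_lt hx)))

lemma integrableOn_Ioi_rpow_mul_log_div (ha : 0 < a) (hs : 0 < s) :
    IntegrableOn (fun x => x ^ (-1 - s) * log (x / a)) (Ioi a) :=
  integrableOn_Ioi_deriv_of_nonneg'
    (fun _ hx => hasDerivAt_rpow_log_div_antideriv ha hs.ne' (ha.trans_le hx))
    (fun _ => rpow_mul_log_div_nonneg ha) (tendsto_rpow_log_div_antideriv ha hs)

lemma integral_Ioi_rpow_mul_log_div (ha : 0 < a) (hs : 0 < s) :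
    ∫ x in Ioi a, x ^ (-1 - s) * log (x / a) = a ^ (-s) / s ^ 2 := by
  rw [integral_Ioi_of_hasDerivAt_of_nonneg'
    (fun _ hx => hasDerivAt_rpow_log_div_antideriv ha hs.ne' (ha.trans_le hx))
    (fun _ => rpow_mul_log_div_nonneg ha) (tendsto_rpow_log_div_antideriv ha hs),
    div_self ha.ne', log_one]
  ring

end LogMoment

lemma log_abs_one_sub (x : ℝ) : log |1 - x| = log (x - 1) := by
  rw [abs_sub_comm, log_abs]

lemma integrableOn_Icc_one_two_log_sub_one : IntegrableOn (fun x => log (x - 1)) (Icc 1 2) := by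
  rw [← intervalIntegrable_iff_integrableOn_Icc_of_le one_le_two]
  simpa [one_add_one_eq_two] using
    (intervalIntegral.intervalIntegrable_log' (a := 0) (b := 1)).comp_sub_right 1

lemma integrableOn_Ioc_one_two_rpow_mul_log_sub_one (p : ℝ) :
    IntegrableOn (fun x => x ^ p * log (x - 1)) (Ioc 1 2) := by
  refine (integrableOn_Icc_one_two_log_sub_one.continuousOn_mul ?_ isCompact_Icc).mono_set
    Ioc_subset_Icc_self
  exact continuousOn_id.rpow_const fun x hx => Or.inl (zero_lt_one.trans_le hx.1).ne'

lemma integral_Ioc_one_two_log_sub_one : ∫ x in Ioc 1 2, log (x - 1) = -1 := by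
  rw [← intervalIntegral.integral_of_le one_le_two, intervalIntegral.integral_comp_sub_right,
    integral_log]
  norm_num

lemma log_div_two_le_log_sub_one {x : ℝ} (hx : 2 ≤ x) : log (x / 2) ≤ log (x - 1) :=
  log_le_log (by linarith) (by linarith)

lemma log_sub_one_le_two_mul_log_div_two {x : ℝ} (hx : 2 ≤ x) :
    log (x - 1) ≤ 2 * log (x / 2) := by
  rw [two_mul, ← log_mul (by positivity) (by positivity)]
  exact log_le_log (by linarith) (by nlinarith)

section Tail

variable {s : ℝ}

lemma integrableOn_Ioi_two_rpow_mul_log_sub_one (hs : 0 < s) :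
    IntegrableOn (fun x => x ^ (-1 - s) * log (x - 1)) (Ioi 2) := by
  refine ((integrableOn_Ioi_rpow_mul_log_div two_pos hs).const_mul 2).mono'
    (by fun_prop : Measurable fun x : ℝ => x ^ (-1 - s) * log (x - 1)).aestronglyMeasurable ?_
  filter_upwards [ae_restrict_mem measurableSet_Ioi] with x (hx : 2 < x)
  have hpow : 0 ≤ x ^ (-1 - s) := rpow_nonneg (by linarith) _
  rw [norm_of_nonneg (mul_nonneg hpow (log_nonneg (by linarith))), mul_left_comm]
  exact mul_le_mul_of_nonneg_left (log_sub_one_le_two_mul_log_div_two hx.le) hpow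

lemma integrableOn_Ioi_one_rpow_mul_log_sub_one (hs : 0 < s) :
    IntegrableOn (fun x => x ^ (-1 - s) * log (x - 1)) (Ioi 1) := by
  rw [← Ioc_union_Ioi_eq_Ioi one_le_two]
  exact (integrableOn_Ioc_one_two_rpow_mul_log_sub_one _).union
    (integrableOn_Ioi_two_rpow_mul_log_sub_one hs)

lemma le_integral_Ioi_one_rpow_mul_log_sub_one (hs : 0 < s) (hs₁ : s ≤ 1) :
    -1 + 1 / (2 * s ^ 2) ≤ ∫ x in Ioi 1, x ^ (-1 - s) * log (x - 1) := by
  rw [← Ioc_union_Ioi_eq_Ioi one_le_two, setIntegral_union (Ioc_disjoint_Ioi le_rfl)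
    measurableSet_Ioi (integrableOn_Ioc_one_two_rpow_mul_log_sub_one _)
    (integrableOn_Ioi_two_rpow_mul_log_sub_one hs)]
  gcongr ?_ + ?_
  · refine integral_Ioc_one_two_log_sub_one.ge.trans <| setIntegral_mono_on
      (integrableOn_Icc_one_two_log_sub_one.mono_set Ioc_subset_Icc_self)
      (integrableOn_Ioc_one_two_rpow_mul_log_sub_one _) measurableSet_Ioc fun x hx => ?_
    have hlog : log (x - 1) ≤ 0 := log_nonpos (by linarith [hx.1]) (by linarith [hx.2])
    have hpow : x ^ (-1 - s) ≤ 1 := rpow_le_one_of_one_le_of_nonpos hx.1.le (by linarith)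
    nlinarith
  · have htwo : 1 / 2 ≤ (2 : ℝ) ^ (-s) := by
      rw [one_div, ← rpow_neg_one]
      exact rpow_le_rpow_of_exponent_le one_le_two (by linarith)
    calc 1 / (2 * s ^ 2) = 1 / 2 / s ^ 2 := by ring
      _ ≤ 2 ^ (-s) / s ^ 2 := by gcongr
      _ = ∫ x in Ioi 2, x ^ (-1 - s) * log (x / 2) :=
          (integral_Ioi_rpow_mul_log_div two_pos hs).symm
      _ ≤ _ := setIntegral_mono_on (integrableOn_Ioi_rpow_mul_log_div two_pos hs)
          (integrableOn_Ioi_two_rpow_mul_log_sub_one hs) measurableSet_Ioi fun x (hx : 2 < x) =>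
            mul_le_mul_of_nonneg_left (log_div_two_le_log_sub_one hx.le)
              (rpow_nonneg (by linarith) _)

end Tail

section Cotangent

variable {φ : ℝ}

lemma cos_le_mul_cos_div_sin (h0 : 0 < φ) (h1 : φ < π / 2) : cos φ ≤ φ * (cos φ / sin φ) := by
  have hsin : 0 < sin φ := sin_pos_of_pos_of_lt_pi h0 (by linarith [pi_pos])
  rw [mul_div_assoc', le_div_iff₀ hsin]
  nlinarith [sin_le h0.le, cos_nonneg_of_neg_pi_div_two_le_of_le (by linarith) h1.le]

lemma mul_cos_div_sin_le_one (h0 : 0 < φ) (h1 : φ < π / 2) : φ * (cos φ / sin φ) ≤ 1 := by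
  have hsin : 0 < sin φ := sin_pos_of_pos_of_lt_pi h0 (by linarith [pi_pos])
  have hcos : 0 < cos φ := cos_pos_of_mem_Ioo ⟨by linarith, h1⟩
  have htan := lt_tan h0 h1
  rw [tan_eq_sin_div_cos, lt_div_iff₀ hcos] at htan
  rw [mul_div_assoc', div_le_one hsin]
  exact htan.le

lemma neg_mul_cos_div_sin_mem_Icc {β : ℝ} (hβ₁ : -1 < β) (hβ₂ : β < -1 / 2) :
    -(2 * (1 + β) / π * (cos ((1 - β) * π / 2) / sin ((1 - β) * π / 2))) ∈
      Icc (2 / π ^ 2) 1 := by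
  set φ := (1 + β) * π / 2 with hφ
  have hφ₀ : 0 < φ := by
    have : 0 < 1 + β := by linarith
    positivity
  have hφ₁ : φ < 1 := by nlinarith [pi_lt_four]
  have hφπ : φ < π / 2 := by linarith [pi_gt_three]
  have heq : -(2 * (1 + β) / π * (cos ((1 - β) * π / 2) / sin ((1 - β) * π / 2))) =
      4 / π ^ 2 * (φ * (cos φ / sin φ)) := by
    rw [show (1 - β) * π / 2 = π - φ by ring, cos_pi_sub, sin_pi_sub, hφ]
    field_simp
    ring
  have hcos : 1 / 2 ≤ cos φ := by nlinarith [one_sub_sq_div_two_le_cos (x := φ)]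
  rw [heq]
  refine ⟨?_, ?_⟩
  · calc 2 / π ^ 2 = 4 / π ^ 2 * (1 / 2) := by ring
      _ ≤ 4 / π ^ 2 * (φ * (cos φ / sin φ)) := by
          gcongr
          exact hcos.trans (cos_le_mul_cos_div_sin hφ₀ hφπ)
  · calc 4 / π ^ 2 * (φ * (cos φ / sin φ)) ≤ 4 / π ^ 2 :=
          mul_le_of_le_one_right (by positivity) (mul_cos_div_sin_le_one hφ₀ hφπ)
      _ ≤ 1 := by
          rw [div_le_one (by positivity)]
          nlinarith [pi_gt_three]

end Cotangent

/-- for `β ∈ (−1,1)`, `∫₁^∞ x^{−2−β}|log|1−x|| dx < ∞`; and as `β → −1⁺` the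
quantity `1 − (2(1+β)/π)·cot((1−β)π/2)·∫₁^∞ x^{−2−β} log|1−x| dx` is bounded below by
`c·(1+β)^{−2}` for some constant `c > 0`. -/
theorem stmt18 :
    (∀ β : ℝ, -1 < β → β < 1 →
      IntegrableOn (fun x : ℝ => x ^ (-2 - β) * abs (Real.log |1 - x|)) (Set.Ioi 1)) ∧
    ∃ c : ℝ, 0 < c ∧ ∀ᶠ β in nhdsWithin (-1 : ℝ) (Set.Ioi (-1)),
      c / (1 + β) ^ 2 ≤
        1 - (2 * (1 + β) / π) * (Real.cos ((1 - β) * π / 2) / Real.sin ((1 - β) * π / 2)) *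
          ∫ x in Set.Ioi (1 : ℝ), x ^ (-2 - β) * Real.log |1 - x| := by
  have hexp (β : ℝ) : -1 - (1 + β) = -2 - β := by ring
  simp_rw [log_abs_one_sub]
  constructor
  · intro β hβ _
    refine IntegrableOn.congr_fun (hexp β ▸ integrableOn_Ioi_one_rpow_mul_log_sub_one
      (by linarith)).norm (fun x (hx : 1 < x) => ?_) measurableSet_Ioi
    rw [norm_mul, norm_of_nonneg (rpow_nonneg (by linarith) _), norm_eq_abs]
  refine ⟨1 / π ^ 2, by positivity, ?_⟩
  filter_upwards [Ioo_mem_nhdsGT (show (-1 : ℝ) < -1 / 2 by norm_num)] with β ⟨hβ₁, hβ₂⟩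
  obtain ⟨hK₁, hK₂⟩ := neg_mul_cos_div_sin_mem_Icc hβ₁ hβ₂
  set K := -(2 * (1 + β) / π * (cos ((1 - β) * π / 2) / sin ((1 - β) * π / 2)))
  have hI := hexp β ▸ le_integral_Ioi_one_rpow_mul_log_sub_one (by linarith) (by linarith)
  set u := 1 / (2 * (1 + β) ^ 2) with hu
  calc 1 / π ^ 2 / (1 + β) ^ 2 = 2 / π ^ 2 * u := by rw [hu]; field_simp
    _ ≤ (1 - K) + K * u :=
        le_add_of_nonneg_of_le (sub_nonneg.2 hK₂)
          (mul_le_mul_of_nonneg_right hK₁ (by positivity))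
    _ = 1 + K * (-1 + u) := by ring
    _ ≤ 1 + K * ∫ x in Ioi 1, x ^ (-2 - β) * log (x - 1) := by
        gcongr
        exact (by positivity : (0 : ℝ) ≤ 2 / π ^ 2).trans hK₁
    _ = _ := by ring
end

section
/- For w(x) = |x|^β with β ∈ (−1,1), the Helson–Szegő constant satisfies [w]²_{A₂(HS)} ≤ sec²(βπ/2), and sec²(βπ/2) ~ (1+β)^{−2} as β → −1⁺. -/
open Real MeasureTheory

/-- The modified Hilbert transform `K` for `L^∞` functions, defined as a
principal-value limit. -/
noncomputable def Kop (f : ℝ → ℝ) (x : ℝ) : ℝ :=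
  Filter.limUnder (nhdsWithin 0 (Set.Ioi 0))
    (fun ε : ℝ => (1 / π) * ∫ y in {y : ℝ | ε < |x - y|},
      f y * (1 / (x - y) + if 1 < |y| then 1 / y else 0))

/-- The square of the Helson–Szegő constant of a weight `w`:
`[w]²_{A₂(HS)} = inf { e^{osc f₁} sec²‖f₂‖_∞ : w = e^{f₁+Kf₂}, f₁,f₂ ∈ L^∞, ‖f₂‖_∞ < π/2 }`. -/
noncomputable def HSconstSq (w : ℝ → ℝ) : ℝ :=
  sInf {c : ℝ | ∃ f₁ f₂ : ℝ → ℝ,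
    (∀ᵐ x : ℝ, w x = Real.exp (f₁ x + Kop f₂ x)) ∧
    (∃ M : ℝ, ∀ x, |f₁ x| ≤ M) ∧
    (∃ b : ℝ, b < π / 2 ∧ ∀ x, |f₂ x| ≤ b) ∧
    c = Real.exp (sSup (Set.range f₁) - sInf (Set.range f₁)) *
        (1 / Real.cos (sSup (Set.range fun x => |f₂ x|))) ^ 2}

open Set Filter Topology

/-!
With `f₁ = 0` and `f₂ = (βπ/2) sign`, the bound reduces to `K sign = (2/π) log |x|` almost
everywhere. Off `{-1, 1, x}` the kernel `1/(x-y) + 1_{|y|>1}/y` has the primitive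
`Ψ y = log⁺ y - log (x - y)`, which is continuous away from `x` and tends to `0` at `±∞`.
For `0 < ε < x`, splitting `{ε < |x - y|}` at `0`, `x - ε` and `x + ε`, the truncated integral
of `sign y` times the kernel is `-2 Ψ 0 + Ψ (x - ε) - Ψ (x + ε) = 2 log x + log⁺ (x - ε) -
log⁺ (x + ε)`, which tends to `2 log x`; negative `x` follow by oddness. For the asymptotics,
`cos (βπ/2) = sin t` with `t = (1 + β)π/2`, and `sin t / t → 1`.
-/

section ImproperFTC

variable {E : Type*} [NormedAddCommGroup E] [NormedSpace ℝ E] [CompleteSpace E]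
  {f f' : ℝ → E} {a : ℝ} {m : E} {s : Set ℝ}

theorem integral_Ioi_of_hasDerivAt_off_countable (hs : s.Countable)
    (hcont : ContinuousOn f (Ici a)) (hderiv : ∀ x ∈ Ioi a \ s, HasDerivAt f (f' x) x)
    (f'int : IntegrableOn f' (Ioi a)) (hf : Tendsto f atTop (𝓝 m)) :
    ∫ x in Ioi a, f' x = m - f a := by
  refine tendsto_nhds_unique (intervalIntegral_tendsto_integral_Ioi a f'int tendsto_id) ?_
  refine (hf.sub_const _).congr' ?_
  filter_upwards [Ioi_mem_atTop a] with b hb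
  exact (integral_eq_of_hasDerivAt_off_countable_of_le f f' (le_of_lt hb) hs
    (hcont.mono Icc_subset_Ici_self) (fun x hx => hderiv x ⟨hx.1.1, hx.2⟩)
    ((intervalIntegrable_iff_integrableOn_Ioc_of_le (le_of_lt hb)).2
      (f'int.mono_set Ioc_subset_Ioi_self))).symm

theorem integral_Iio_of_hasDerivAt_off_countable (hs : s.Countable)
    (hcont : ContinuousOn f (Iic a)) (hderiv : ∀ x ∈ Iio a \ s, HasDerivAt f (f' x) x)
    (f'int : IntegrableOn f' (Iio a)) (hf : Tendsto f atBot (𝓝 m)) :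
    ∫ x in Iio a, f' x = f a - m := by
  rw [← integral_Iic_eq_integral_Iio]
  have f'int' : IntegrableOn f' (Iic a) := (integrableOn_Iic_iff_integrableOn_Iio (by simp)).2 f'int
  refine tendsto_nhds_unique (intervalIntegral_tendsto_integral_Iic a f'int' tendsto_id) ?_
  refine (hf.const_sub _).congr' ?_
  filter_upwards [Iio_mem_atBot a] with b hb
  exact (integral_eq_of_hasDerivAt_off_countable_of_le f f' (le_of_lt hb) hs
    (hcont.mono Icc_subset_Iic_self) (fun x hx => hderiv x ⟨hx.1.2, hx.2⟩)
    ((intervalIntegrable_iff_integrableOn_Ioc_of_le (le_of_lt hb)).2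
      (f'int'.mono_set Ioc_subset_Iic_self))).symm

end ImproperFTC

theorem Real.hasDerivAt_posLog {y : ℝ} (hy : |y| ≠ 1) :
    HasDerivAt posLog (if 1 < |y| then y⁻¹ else 0) y := by
  split_ifs with h
  · have : posLog =ᶠ[𝓝 y] log := by
      filter_upwards [(continuous_abs.isOpen_preimage _ isOpen_Ioi).mem_nhds h] with z hz
      exact posLog_eq_log (le_of_lt hz)
    exact (hasDerivAt_log (by rintro rfl; simp at h; linarith)).congr_of_eventuallyEq this
  · have h' : |y| < 1 := lt_of_le_of_ne (not_lt.1 h) hy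
    have : posLog =ᶠ[𝓝 y] fun _ => 0 := by
      filter_upwards [(continuous_abs.isOpen_preimage _ isOpen_Iio).mem_nhds h'] with z hz
      exact (posLog_eq_zero_iff z).2 (le_of_lt hz)
    exact (hasDerivAt_const y (0 : ℝ)).congr_of_eventuallyEq this

theorem abs_ne_one_of_notMem {y : ℝ} (hy : y ∉ ({-1, 1} : Set ℝ)) : |y| ≠ 1 := by
  intro h
  rcases (abs_eq zero_le_one).1 h with h | h <;> simp [h] at hy

theorem Real.measurable_sign : Measurable Real.sign :=
  Measurable.ite measurableSet_Iio measurable_const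
    (Measurable.ite measurableSet_Ioi measurable_const measurable_const)

theorem Real.abs_sign_le_one (y : ℝ) : |Real.sign y| ≤ 1 := by
  rcases Real.sign_apply_eq y with h | h | h <;> simp [h]

theorem abs_const_mul_sign_le (c y : ℝ) : |c * Real.sign y| ≤ |c| := by
  rw [abs_mul]
  exact mul_le_of_le_one_right (abs_nonneg c) (Real.abs_sign_le_one y)

noncomputable def hilbertKernel (x y : ℝ) : ℝ :=
  1 / (x - y) + if 1 < |y| then 1 / y else 0

-- `Real.log` is even, so this is `log⁺ |y| - log |x - y|` on both sides of `x`.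
noncomputable def hilbertKernelPrimitive (x y : ℝ) : ℝ :=
  posLog y - log (x - y)

theorem hasDerivAt_hilbertKernelPrimitive {x y : ℝ} (hxy : y ≠ x) (hy : |y| ≠ 1) :
    HasDerivAt (hilbertKernelPrimitive x) (hilbertKernel x y) y := by
  have hlog := ((hasDerivAt_id y).const_sub x).log (sub_ne_zero.2 hxy.symm)
  refine ((Real.hasDerivAt_posLog hy).sub hlog).congr_deriv ?_
  simp only [hilbertKernel, id, one_div]
  split_ifs <;> ring

theorem continuousOn_hilbertKernelPrimitive {x : ℝ} {s : Set ℝ} (hx : x ∉ s) :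
    ContinuousOn (hilbertKernelPrimitive x) s :=
  continuous_posLog.continuousOn.sub <| (continuousOn_const.sub continuousOn_id).log
    fun _ hy => sub_ne_zero.2 (ne_of_mem_of_not_mem hy hx).symm

theorem hilbertKernelPrimitive_neg (x y : ℝ) :
    hilbertKernelPrimitive x (-y) = hilbertKernelPrimitive (-x) y := by
  rw [hilbertKernelPrimitive, hilbertKernelPrimitive, posLog_neg,
    show -x - y = -(x - -y) by ring, log_neg_eq_log]

theorem tendsto_hilbertKernelPrimitive_atTop (x : ℝ) :
    Tendsto (hilbertKernelPrimitive x) atTop (𝓝 0) := by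
  have hlim : Tendsto (fun y : ℝ => -log (1 - x * y⁻¹)) atTop (𝓝 0) := by
    have h := (tendsto_inv_atTop_zero.const_mul x).const_sub 1
    simpa using (h.log (by simp)).neg
  refine hlim.congr' ?_
  filter_upwards [eventually_gt_atTop (max 1 x)] with y hy
  have hy1 : 1 < y := (le_max_left _ _).trans_lt hy
  have hyx : x < y := (le_max_right _ _).trans_lt hy
  have hy0 : 0 < y := by linarith
  have hsplit : 1 - x * y⁻¹ = (y - x) / y := by field_simp
  have hpos : posLog y = log y := posLog_eq_log (by rw [abs_of_pos hy0]; exact le_of_lt hy1)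
  have hneg : log (x - y) = log (y - x) := by rw [← log_neg_eq_log, neg_sub]
  rw [hsplit, log_div (sub_pos.2 hyx).ne' hy0.ne', hilbertKernelPrimitive, hpos, hneg]
  ring

theorem tendsto_hilbertKernelPrimitive_atBot (x : ℝ) :
    Tendsto (hilbertKernelPrimitive x) atBot (𝓝 0) := by
  have := (tendsto_hilbertKernelPrimitive_atTop (-x)).comp tendsto_neg_atBot_atTop
  refine this.congr fun y => ?_
  simp [Function.comp, ← hilbertKernelPrimitive_neg]

theorem measurable_hilbertKernel (x : ℝ) : Measurable (hilbertKernel x) := by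
  unfold hilbertKernel
  exact (measurable_const.div (measurable_const.sub measurable_id)).add
    (Measurable.ite (measurableSet_lt measurable_const measurable_abs)
      (measurable_const.div measurable_id) measurable_const)

theorem abs_hilbertKernel_le {x y ε : ℝ} (hε : 0 < ε) (h : ε ≤ |x - y|) :
    |hilbertKernel x y| ≤ (2 * (1 + x ^ 2) / ε + 2 * |x|) * (1 + y ^ 2)⁻¹ := by
  set C := 2 * (1 + x ^ 2) / ε + 2 * |x| with hC_def
  have hxy : 0 < |x - y| := hε.trans_le h
  have hC : 2 * (1 + x ^ 2) + 2 * |x| * |x - y| ≤ C * |x - y| := by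
    have : 2 * (1 + x ^ 2) ≤ 2 * (1 + x ^ 2) / ε * |x - y| := by
      rw [div_mul_eq_mul_div, le_div_iff₀ hε]
      exact mul_le_mul_of_nonneg_left h (by positivity)
    linarith
  rw [← div_eq_mul_inv, le_div_iff₀ (by positivity), ← sq_abs y]
  unfold hilbertKernel
  split_ifs with hy
  · have hy0 : y ≠ 0 := by rintro rfl; simp at hy; linarith
    have hsum : 1 / (x - y) + 1 / y = x / ((x - y) * y) := by
      rw [div_add_div _ _ (abs_pos.1 hxy) hy0]
      ring
    have htri : |y| ≤ |x| + |x - y| := by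
      linarith [abs_sub_abs_le_abs_sub y x, abs_sub_comm x y]
    rw [hsum, abs_div, abs_mul, div_mul_eq_mul_div, div_le_iff₀ (by positivity)]
    have hb := mul_le_mul_of_nonneg_left htri (mul_nonneg (abs_nonneg x) (abs_nonneg y))
    have hb' := mul_le_mul_of_nonneg_left hy.le (add_nonneg zero_le_one (sq_nonneg |x|))
    have hC' := mul_le_mul_of_nonneg_right hC (abs_nonneg y)
    rw [← sq_abs x] at hC'
    nlinarith [sq_nonneg (|x| - 1), mul_nonneg (mul_nonneg (abs_nonneg x) hxy.le) (abs_nonneg y)]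
  · have hy1 : 1 + |y| ^ 2 ≤ 2 := by nlinarith [abs_nonneg y]
    have h2 : 2 / ε ≤ 2 * (1 + x ^ 2) / ε := by gcongr; nlinarith [sq_nonneg x]
    calc |1 / (x - y) + 0| * (1 + |y| ^ 2) ≤ 1 / ε * 2 := by
          rw [add_zero, abs_div, abs_one]
          exact mul_le_mul (one_div_le_one_div_of_le hε h) hy1 (by positivity) (by positivity)
      _ = 2 / ε := by ring
      _ ≤ C := by rw [hC_def]; linarith [abs_nonneg x]

theorem integrableOn_hilbertKernel (x : ℝ) {ε : ℝ} (hε : 0 < ε) :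
    IntegrableOn (hilbertKernel x) {y | ε ≤ |x - y|} := by
  have hS : MeasurableSet {y | ε ≤ |x - y|} :=
    measurableSet_le measurable_const (measurable_const.sub measurable_id).abs
  refine Integrable.mono' (g := fun y => (2 * (1 + x ^ 2) / ε + 2 * |x|) * (1 + y ^ 2)⁻¹)
    (integrable_inv_one_add_sq.const_mul _).integrableOn
    (measurable_hilbertKernel x).aestronglyMeasurable (ae_restrict_of_forall_mem hS ?_)
  exact fun y hy => abs_hilbertKernel_le hε hy

theorem setIntegral_Iio_hilbertKernel {x a : ℝ} (ha : a < x) :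
    ∫ y in Iio a, hilbertKernel x y = hilbertKernelPrimitive x a := by
  have hsub : Iio a ⊆ {y | x - a ≤ |x - y|} := fun y (hy : y < a) => by
    rw [mem_ofPred_eq, abs_of_pos (by linarith)]; linarith
  rw [integral_Iio_of_hasDerivAt_off_countable (s := {-1, 1}) (by simp)
    (continuousOn_hilbertKernelPrimitive fun h : x ≤ a => h.not_gt ha)
    (fun y hy => hasDerivAt_hilbertKernelPrimitive (hy.1.out.trans ha).ne
      (abs_ne_one_of_notMem hy.2))
    ((integrableOn_hilbertKernel x (sub_pos.2 ha)).mono_set hsub)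
    (tendsto_hilbertKernelPrimitive_atBot x), sub_zero]

theorem setIntegral_Ioi_hilbertKernel {x a : ℝ} (ha : x < a) :
    ∫ y in Ioi a, hilbertKernel x y = -hilbertKernelPrimitive x a := by
  have hsub : Ioi a ⊆ {y | a - x ≤ |x - y|} := fun y (hy : a < y) => by
    rw [mem_ofPred_eq, abs_sub_comm, abs_of_pos (by linarith)]; linarith
  rw [integral_Ioi_of_hasDerivAt_off_countable (s := {-1, 1}) (by simp)
    (continuousOn_hilbertKernelPrimitive fun h : a ≤ x => h.not_gt ha)
    (fun y hy => hasDerivAt_hilbertKernelPrimitive (ha.trans hy.1.out).ne'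
      (abs_ne_one_of_notMem hy.2))
    ((integrableOn_hilbertKernel x (sub_pos.2 ha)).mono_set hsub)
    (tendsto_hilbertKernelPrimitive_atTop x), zero_sub]

theorem setIntegral_Ioo_hilbertKernel {x a b : ℝ} (hab : a ≤ b) (hb : b < x) :
    ∫ y in Ioo a b, hilbertKernel x y
      = hilbertKernelPrimitive x b - hilbertKernelPrimitive x a := by
  have hsub : Ioc a b ⊆ {y | x - b ≤ |x - y|} := fun y hy => by
    rw [mem_ofPred_eq, abs_of_pos (by linarith [hy.2])]; linarith [hy.2]
  rw [← integral_Ioc_eq_integral_Ioo, ← intervalIntegral.integral_of_le hab]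
  exact integral_eq_of_hasDerivAt_off_countable_of_le _ _ hab (s := {-1, 1}) (by simp)
    (continuousOn_hilbertKernelPrimitive fun h : x ∈ Icc a b => h.2.not_gt hb)
    (fun y hy => hasDerivAt_hilbertKernelPrimitive (hy.1.2.trans hb).ne
      (abs_ne_one_of_notMem hy.2))
    ((intervalIntegrable_iff_integrableOn_Ioc_of_le hab).2
      ((integrableOn_hilbertKernel x (sub_pos.2 hb)).mono_set hsub))

noncomputable def truncatedHilbert (f : ℝ → ℝ) (x ε : ℝ) : ℝ :=
  ∫ y in {y | ε < |x - y|}, f y * hilbertKernel x y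

theorem Kop_eq_of_tendsto {f : ℝ → ℝ} {x L : ℝ}
    (h : Tendsto (truncatedHilbert f x) (𝓝[>] 0) (𝓝 L)) : Kop f x = L / π :=
  ((h.const_mul (1 / π)).limUnder_eq).trans (by ring)

theorem hilbertKernel_neg (x y : ℝ) : hilbertKernel (-x) (-y) = -hilbertKernel x y := by
  simp only [hilbertKernel, abs_neg, show -x - -y = -(x - y) by ring, one_div, inv_neg]
  split_ifs <;> ring

theorem truncatedHilbert_neg_of_odd {f : ℝ → ℝ} (hf : ∀ y, f (-y) = -f y) (x ε : ℝ) :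
    truncatedHilbert f (-x) ε = truncatedHilbert f x ε := by
  have hpre : Neg.neg ⁻¹' {y | ε < |-x - y|} = {y | ε < |x - y|} := by
    ext y
    simp only [mem_preimage, mem_ofPred_eq, show -x - -y = -(x - y) by ring, abs_neg]
  rw [truncatedHilbert, truncatedHilbert,
    ← (Measure.measurePreserving_neg volume).setIntegral_preimage_emb
      (Homeomorph.neg ℝ).measurableEmbedding, hpre]
  simp only [hf, hilbertKernel_neg, neg_mul_neg]

theorem truncatedHilbert_sign {x ε : ℝ} (hε : 0 < ε) (hεx : ε < x) :
    truncatedHilbert Real.sign x ε = 2 * log x + posLog (x - ε) - posLog (x + ε) := by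
  have hS : {y | ε < |x - y|} = Iio (x - ε) ∪ Ioi (x + ε) := by
    ext y
    simp only [mem_ofPred_eq, mem_union, mem_Iio, mem_Ioi, lt_abs]
    constructor <;> rintro (h | h) <;> [left; right; left; right] <;> linarith
  have hint : IntegrableOn (fun y => Real.sign y * hilbertKernel x y) {y | ε < |x - y|} := by
    refine Integrable.bdd_mul (c := 1) ((integrableOn_hilbertKernel x hε).mono_set
      fun y (hy : ε < |x - y|) => le_of_lt hy) Real.measurable_sign.aestronglyMeasurable
      (ae_of_all _ fun y => Real.abs_sign_le_one y)
  rw [hS] at hint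
  have hsplit : Iio (x - ε) = Iio 0 ∪ Ico 0 (x - ε) := (Iio_union_Ico_eq_Iio (by linarith)).symm
  have hint' := hint.left_of_union
  rw [hsplit] at hint'
  have hneg : ∫ y in Iio 0, Real.sign y * hilbertKernel x y = -hilbertKernelPrimitive x 0 := by
    rw [setIntegral_congr_fun measurableSet_Iio fun y (hy : y < 0) => by
      rw [Real.sign_of_neg hy, neg_one_mul], integral_neg,
      setIntegral_Iio_hilbertKernel (hε.trans hεx)]
  have hmid : ∫ y in Ico 0 (x - ε), Real.sign y * hilbertKernel x y
      = hilbertKernelPrimitive x (x - ε) - hilbertKernelPrimitive x 0 := by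
    rw [integral_Ico_eq_integral_Ioo, setIntegral_congr_fun measurableSet_Ioo fun y hy => by
      rw [Real.sign_of_pos hy.1, one_mul],
      setIntegral_Ioo_hilbertKernel (by linarith) (by linarith)]
  have hpos : ∫ y in Ioi (x + ε), Real.sign y * hilbertKernel x y
      = -hilbertKernelPrimitive x (x + ε) := by
    rw [setIntegral_congr_fun measurableSet_Ioi fun y (hy : x + ε < y) => by
      rw [Real.sign_of_pos (by linarith), one_mul], setIntegral_Ioi_hilbertKernel (by linarith)]
  rw [truncatedHilbert, hS, setIntegral_union (Iio_disjoint_Ioi_of_le (by linarith))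
    measurableSet_Ioi hint.left_of_union hint.right_of_union, hsplit,
    setIntegral_union ((Iio_disjoint_Ici le_rfl).mono_right Ico_subset_Ici_self) measurableSet_Ico
    hint'.left_of_union hint'.right_of_union, hneg, hmid, hpos]
  simp only [hilbertKernelPrimitive, sub_zero, sub_sub_cancel]
  rw [show x - (x + ε) = -ε by ring, log_neg_eq_log, posLog_zero]
  ring

theorem tendsto_truncatedHilbert_sign {x : ℝ} (hx : x ≠ 0) :
    Tendsto (truncatedHilbert Real.sign x) (𝓝[>] 0) (𝓝 (2 * log |x|)) := by
  wlog hx' : 0 < x generalizing x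
  · have := this (neg_ne_zero.2 hx) (neg_pos.2 (lt_of_le_of_ne (not_lt.1 hx') hx))
    rw [abs_neg] at this
    exact this.congr (truncatedHilbert_neg_of_odd (fun _ => Real.sign_neg) x)
  have hlim : Tendsto (fun ε => 2 * log x + posLog (x - ε) - posLog (x + ε)) (𝓝[>] 0)
      (𝓝 (2 * log |x|)) := by
    refine (Continuous.tendsto' (by fun_prop) 0 _ ?_).mono_left nhdsWithin_le_nhds
    simp [abs_of_pos hx']
  refine hlim.congr' ?_
  filter_upwards [Ioo_mem_nhdsGT hx'] with ε hε using (truncatedHilbert_sign hε.1 hε.2).symm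

theorem Kop_const_mul_sign (c : ℝ) {x : ℝ} (hx : x ≠ 0) :
    Kop (fun y => c * Real.sign y) x = 2 * c / π * log |x| := by
  have h : truncatedHilbert (fun y => c * Real.sign y) x
      = fun ε => c * truncatedHilbert Real.sign x ε := by
    ext ε
    simp only [truncatedHilbert, mul_assoc, integral_const_mul]
  rw [Kop_eq_of_tendsto (h ▸ (tendsto_truncatedHilbert_sign hx).const_mul c)]
  ring

theorem abs_rpow_eq_exp_Kop (β : ℝ) {x : ℝ} (hx : x ≠ 0) :
    |x| ^ β = exp (Kop (fun y => β * π / 2 * Real.sign y) x) := by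
  rw [Kop_const_mul_sign _ hx, rpow_def_of_pos (abs_pos.2 hx)]
  congr 1
  field_simp

theorem HSconstSq_le_of_ae_eq_exp_Kop {w f : ℝ → ℝ} {b : ℝ}
    (hw : ∀ᵐ x, w x = exp (Kop f x)) (hb : b < π / 2) (hf : ∀ x, |f x| ≤ b) :
    HSconstSq w ≤ (1 / cos (sSup (range fun x => |f x|))) ^ 2 := by
  refine csInf_le ⟨0, ?_⟩
    ⟨0, f, by simpa using hw, ⟨0, by simp⟩, ⟨b, hb, hf⟩, by simp⟩
  rintro _ ⟨f₁, f₂, -, -, -, rfl⟩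
  positivity

theorem sSup_range_abs_const_mul_sign (c : ℝ) : sSup (range fun y => |c * Real.sign y|) = |c| :=
  IsGreatest.csSup_eq ⟨⟨1, by simp [Real.sign_one]⟩, by
    rintro _ ⟨y, rfl⟩
    exact abs_const_mul_sign_le c y⟩

theorem tendsto_sec_sq_mul_sq :
    Tendsto (fun β : ℝ => (1 / cos (β * π / 2)) ^ 2 * (1 + β) ^ 2) (𝓝[>] (-1))
      (𝓝 (4 / π ^ 2)) := by
  have hlim : Tendsto (fun β : ℝ => 4 / π ^ 2 / sinc ((1 + β) * (π / 2)) ^ 2) (𝓝[>] (-1))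
      (𝓝 (4 / π ^ 2)) := by
    have hcont : ContinuousAt (fun β : ℝ => 4 / π ^ 2 / sinc ((1 + β) * (π / 2)) ^ 2) (-1) :=
      continuousAt_const.div (by fun_prop) (by simp)
    simpa using hcont.tendsto.mono_left nhdsWithin_le_nhds
  refine hlim.congr' ?_
  filter_upwards [self_mem_nhdsWithin] with β (hβ : -1 < β)
  have ht : 0 < (1 + β) * (π / 2) := mul_pos (by linarith) (by positivity)
  rw [sinc_of_ne_zero ht.ne', show β * π / 2 = (1 + β) * (π / 2) - π / 2 by ring,
    cos_sub_pi_div_two]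
  field_simp
  ring

/-- for `w(x) = |x|^β` with `β ∈ (−1,1)`, `[w]²_{A₂(HS)} ≤ sec²(βπ/2)`, and
`sec²(βπ/2) ~ (1+β)^{−2}` as `β → −1⁺` (i.e. `sec²(βπ/2)·(1+β)² → 4/π²`). -/
theorem stmt19 :
    (∀ β : ℝ, -1 < β → β < 1 →
      HSconstSq (fun x => |x| ^ β) ≤ (1 / Real.cos (β * π / 2)) ^ 2) ∧
    Filter.Tendsto (fun β : ℝ => (1 / Real.cos (β * π / 2)) ^ 2 * (1 + β) ^ 2)
      (nhdsWithin (-1 : ℝ) (Set.Ioi (-1))) (nhds (4 / π ^ 2)) := by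
  refine ⟨fun β hβ₁ hβ₂ => ?_, tendsto_sec_sq_mul_sq⟩
  have hc : |β * π / 2| < π / 2 := by
    rw [abs_div, abs_mul, abs_of_pos pi_pos, abs_two]
    have : |β| < 1 := abs_lt.2 ⟨hβ₁, hβ₂⟩
    nlinarith [pi_pos]
  have hw : ∀ᵐ x : ℝ, |x| ^ β = exp (Kop (fun y => β * π / 2 * Real.sign y) x) := by
    filter_upwards [Measure.ae_ne volume 0] with x hx using abs_rpow_eq_exp_Kop β hx
  calc HSconstSq (fun x => |x| ^ β)
      ≤ (1 / cos (sSup (range fun y => |β * π / 2 * Real.sign y|))) ^ 2 :=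
        HSconstSq_le_of_ae_eq_exp_Kop hw hc (abs_const_mul_sign_le _)
    _ = (1 / cos (β * π / 2)) ^ 2 := by rw [sSup_range_abs_const_mul_sign, cos_abs]
end
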